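/- arXiv:1905.12936 — 2 statements merged into one kernel-verified Lean document; each statement's English description precedes it below -/
import Mathlib

section
/- (Corollary 1 of the paper.) Let α, β, γ, δ be real numbers with α·δ − β·γ ≠ 0, let M ∈ Matrix (Fin 3) (Fin 3) ℝ be invertible, and let q₁, q₂ : Fin 3 → ℝ[X] be triples of polynomials, each of whose three components has only unit common divisors (in particular, not all components are zero). Suppose there exists a ∈ RatFunc ℝ such that for every i ∈ Fin 3, algebraMap ((M·q₁) i) = a * Polynomial.aeval ψ (q₂ i) in RatFunc ℝ. Then max over i of natDegree (q₁ i) equals max over i of natDegree (q₂ i). -/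
/-!
Clearing the denominator `(γX + δ)^n`, with `n = max deg q₂`, turns `q₂(ψ)` into polynomials of
degree `≤ n`. The components of `M·q₁` have only unit common divisors, so the numerator of `a`
divides `(γX + δ)^n`, and comparing degrees gives `max deg (M·q₁) ≤ n`; since `M` is invertible,
`max deg q₁ ≤ max deg q₂`. The reverse inequality is the same argument after substituting the
inverse Möbius transformation `X ↦ (δX - β)/(-γX + α)` into the relation, which is possible
because a non-constant rational function is transcendental.
-/

open Polynomial

/-- The Möbius transformation `ψ = (αX+β)/(γX+δ)` as an element of `RatFunc ℝ`. -/
noncomputable def mobius (α β γ δ : ℝ) : RatFunc ℝ :=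
  (algebraMap (Polynomial ℝ) (RatFunc ℝ) (C α * X + C β)) /
  (algebraMap (Polynomial ℝ) (RatFunc ℝ) (C γ * X + C δ))

def IsRelPrimeFamily {ι R : Type*} [Monoid R] (s : ι → R) : Prop :=
  ∀ d, (∀ i, d ∣ s i) → IsUnit d

namespace IsRelPrimeFamily

variable {ι R : Type*}

theorem exists_ne_zero [CommMonoidWithZero R] [Nontrivial R] {s : ι → R}
    (hs : IsRelPrimeFamily s) : ∃ i, s i ≠ 0 := by
  by_contra! h
  exact not_isUnit_zero (hs 0 fun i => by rw [h i])

theorem span_range_eq_top [CommRing R] [IsPrincipalIdealRing R] {s : ι → R}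
    (hs : IsRelPrimeFamily s) : Ideal.span (Set.range s) = ⊤ := by
  obtain ⟨g, hg⟩ := Submodule.IsPrincipal.principal (Ideal.span (Set.range s))
  rw [hg, Ideal.submodule_span_eq, Ideal.span_singleton_eq_top]
  refine hs g fun i => Ideal.mem_span_singleton.mp ?_
  rw [← Ideal.submodule_span_eq, ← hg]
  exact Ideal.subset_span ⟨i, rfl⟩

theorem dvd_of_forall_dvd_mul [Fintype ι] [CommRing R] [IsPrincipalIdealRing R] {s : ι → R}
    (hs : IsRelPrimeFamily s) {b P : R} (h : ∀ i, b ∣ s i * P) : b ∣ P := by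
  obtain ⟨c, hc⟩ := Ideal.mem_span_range_iff_exists_fun.mp
    (hs.span_range_eq_top ▸ Submodule.mem_top : (1 : R) ∈ Ideal.span (Set.range s))
  rw [← one_mul P, ← hc, Finset.sum_mul]
  exact Finset.dvd_sum fun i _ => by rw [mul_assoc]; exact (h i).mul_left _

end IsRelPrimeFamily

section MatrixAction

open Matrix.Module

variable {ι R : Type*} [Fintype ι] [DecidableEq ι] [CommRing R]

theorem Matrix.inv_smul_smul_of_isUnit {M : Matrix ι ι R} (hM : IsUnit M) {V : Type*}
    [AddCommGroup V] [Module R V] (v : ι → V) : M⁻¹ • M • v = v := by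
  rw [smul_smul, Matrix.nonsing_inv_mul M ((Matrix.isUnit_iff_isUnit_det M).mp hM), one_smul]

theorem IsRelPrimeFamily.matrix_smul {A : Type*} [CommRing A] [Algebra R A] {M : Matrix ι ι R}
    (hM : IsUnit M) {v : ι → A} (hv : IsRelPrimeFamily v) : IsRelPrimeFamily (M • v) := by
  refine fun d hd => hv d fun l => ?_
  rw [← M.inv_smul_smul_of_isUnit hM v]
  exact Finset.dvd_sum fun i _ => by rw [Algebra.smul_def]; exact (hd i).mul_left _

theorem sup_natDegree_matrix_smul_le (N : Matrix ι ι R) (v : ι → R[X]) :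
    Finset.univ.sup (fun i => ((N • v) i).natDegree)
      ≤ Finset.univ.sup (fun i => (v i).natDegree) :=
  Finset.sup_le fun _ _ => natDegree_sum_le_of_forall_le _ _ fun j _ =>
    (natDegree_smul_le _ _).trans
      (Finset.le_sup (f := fun i => (v i).natDegree) (Finset.mem_univ j))

theorem sup_natDegree_le_sup_natDegree_matrix_smul {M : Matrix ι ι R} (hM : IsUnit M)
    (v : ι → R[X]) :
    Finset.univ.sup (fun i => (v i).natDegree)
      ≤ Finset.univ.sup (fun i => ((M • v) i).natDegree) := by
  conv_lhs => rw [← M.inv_smul_smul_of_isUnit hM v]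
  exact sup_natDegree_matrix_smul_le _ _

end MatrixAction

namespace Polynomial

variable {R : Type*} [CommSemiring R]

/-- `D ^ n * q (A / D)`, with the denominators cleared. -/
noncomputable def homogenizedComp (q : R[X]) (n : ℕ) (A D : R[X]) :
    R[X] :=
  ∑ k ∈ Finset.range (n + 1), C (q.coeff k) * A ^ k * D ^ (n - k)

theorem natDegree_homogenizedComp_le (q : R[X]) (n : ℕ)
    {A D : R[X]} (hA : A.natDegree ≤ 1) (hD : D.natDegree ≤ 1) :
    (q.homogenizedComp n A D).natDegree ≤ n := by
  refine natDegree_sum_le_of_forall_le _ _ fun k hk => ?_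
  have hkn : k ≤ n := Nat.lt_succ_iff.mp (Finset.mem_range.mp hk)
  calc (C (q.coeff k) * A ^ k * D ^ (n - k)).natDegree
      ≤ (C (q.coeff k)).natDegree + (A ^ k).natDegree + (D ^ (n - k)).natDegree :=
        natDegree_mul_le.trans (add_le_add_left natDegree_mul_le _)
    _ ≤ 0 + k * 1 + (n - k) * 1 := by
        gcongr
        exacts [natDegree_C _ |>.le, natDegree_pow_le_of_le k hA, natDegree_pow_le_of_le _ hD]
    _ = n := by omega

theorem algebraMap_homogenizedComp {K : Type*} [Field K] {q : K[X]} {n : ℕ}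
    (hq : q.natDegree ≤ n) (A : K[X]) {D : K[X]} (hD : D ≠ 0) :
    algebraMap K[X] (RatFunc K) (q.homogenizedComp n A D)
      = aeval (algebraMap K[X] (RatFunc K) A / algebraMap K[X] (RatFunc K) D) q
        * algebraMap K[X] (RatFunc K) D ^ n := by
  have hD' := RatFunc.algebraMap_ne_zero hD
  conv_rhs => rw [q.as_sum_range' (n + 1) (Nat.lt_succ_of_le hq)]
  rw [map_sum, Finset.sum_mul, homogenizedComp, map_sum]
  refine Finset.sum_congr rfl fun k hk => ?_
  have hkn : k ≤ n := Nat.lt_succ_iff.mp (Finset.mem_range.mp hk)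
  rw [aeval_monomial, map_mul, map_mul, map_pow, map_pow, div_pow, pow_sub₀ _ hD' hkn,
    RatFunc.algebraMap_C, RatFunc.algebraMap_eq_C]
  field_simp

end Polynomial

section DegreeBound

variable {K ι : Type*} [Field K] [Fintype ι]

theorem RatFunc.mul_denom_eq_num_mul {x y : K[X]} {a : RatFunc K}
    (h : algebraMap K[X] (RatFunc K) x = a * algebraMap K[X] (RatFunc K) y) :
    x * a.denom = a.num * y := by
  apply IsFractionRing.injective K[X] (RatFunc K)
  rw [map_mul, map_mul, h, mul_right_comm]
  nth_rw 1 [← a.num_div_denom]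
  rw [div_mul_cancel₀ _ (RatFunc.algebraMap_ne_zero a.denom_ne_zero)]

theorem natDegree_le_of_algebraMap_mul_eq {s T : ι → K[X]} (hs : IsRelPrimeFamily s)
    {P : K[X]} (hP : P ≠ 0) {a : RatFunc K}
    (h : ∀ i, algebraMap K[X] (RatFunc K) (s i * P) = a * algebraMap K[X] (RatFunc K) (T i))
    (i : ι) : (s i).natDegree ≤ (T i).natDegree := by
  have hpoly i : s i * P * a.denom = a.num * T i := RatFunc.mul_denom_eq_num_mul (h i)
  have hnum : a.num ∣ P := hs.dvd_of_forall_dvd_mul fun j =>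
    (RatFunc.isCoprime_num_denom a).dvd_of_dvd_mul_right ⟨T j, hpoly j⟩
  by_cases hsi : s i = 0
  · simp [hsi]
  have hlhs : s i * P * a.denom ≠ 0 := mul_ne_zero (mul_ne_zero hsi hP) a.denom_ne_zero
  rw [hpoly i] at hlhs
  have hdeg := congrArg natDegree (hpoly i)
  rw [natDegree_mul (mul_ne_zero hsi hP) a.denom_ne_zero, natDegree_mul hsi hP,
    natDegree_mul (left_ne_zero_of_mul hlhs) (right_ne_zero_of_mul hlhs)] at hdeg
  have := natDegree_le_of_dvd hnum hP
  omega

theorem sup_natDegree_le_of_eq_mul_aeval_div {A D : K[X]} (hA : A.natDegree ≤ 1)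
    (hD1 : D.natDegree ≤ 1) (hD : D ≠ 0) {s q : ι → K[X]} (hs : IsRelPrimeFamily s)
    {a : RatFunc K}
    (heq : ∀ i, algebraMap K[X] (RatFunc K) (s i)
      = a * aeval (algebraMap K[X] (RatFunc K) A / algebraMap K[X] (RatFunc K) D) (q i)) :
    Finset.univ.sup (fun i => (s i).natDegree) ≤ Finset.univ.sup (fun i => (q i).natDegree) := by
  set n := Finset.univ.sup (fun i => (q i).natDegree)
  have hq j : (q j).natDegree ≤ n :=
    Finset.le_sup (f := fun i => (q i).natDegree) (Finset.mem_univ j)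
  have hclear j : algebraMap K[X] (RatFunc K) (s j * D ^ n)
      = a * algebraMap K[X] (RatFunc K) ((q j).homogenizedComp n A D) := by
    rw [map_mul, heq j, algebraMap_homogenizedComp (hq j) A hD, map_pow, mul_assoc]
  exact Finset.sup_le fun i _ =>
    (natDegree_le_of_algebraMap_mul_eq hs (pow_ne_zero n hD) hclear i).trans
      (natDegree_homogenizedComp_le _ n hA hD1)

end DegreeBound

section Mobius

theorem linear_ne_zero_of_det_ne_zero {K : Type*} [Field K] {α β γ δ : K}
    (h : α * δ - β * γ ≠ 0) : C γ * X + C δ ≠ 0 := by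
  intro h0
  have hγ : γ = 0 := by simpa using congrArg (coeff · 1) h0
  have hδ : δ = 0 := by simpa using congrArg (coeff · 0) h0
  exact h (by rw [hγ, hδ]; ring)

theorem mobius_comp_inv {F : Type*} [Field F] {a b c d x : F} (h : a * d - b * c ≠ 0)
    (hx : -c * x + a ≠ 0) :
    (a * ((d * x + -b) / (-c * x + a)) + b) / (c * ((d * x + -b) / (-c * x + a)) + d) = x := by
  have hden : c * ((d * x + -b) / (-c * x + a)) + d = (a * d - b * c) / (-c * x + a) := by
    rw [eq_div_iff hx, add_mul, mul_assoc, div_mul_cancel₀ _ hx]; ring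
  have hnum : a * ((d * x + -b) / (-c * x + a)) + b = (a * d - b * c) * x / (-c * x + a) := by
    rw [eq_div_iff hx, add_mul, mul_assoc, div_mul_cancel₀ _ hx]; ring
  rw [hden, hnum, div_div_div_cancel_right₀ hx, mul_div_cancel_left₀ _ h]

theorem det_adjugate_ne_zero {R : Type*} [CommRing R] {α β γ δ : R} (h : α * δ - β * γ ≠ 0) :
    δ * α - -β * -γ ≠ 0 := by
  contrapose! h; linear_combination h

variable {α β γ δ : ℝ}

theorem aeval_mobius_inv_div (h : α * δ - β * γ ≠ 0) :
    aeval (mobius δ (-β) (-γ) α) (C α * X + C β) / aeval (mobius δ (-β) (-γ) α) (C γ * X + C δ)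
      = RatFunc.X := by
  have hD := RatFunc.algebraMap_ne_zero (linear_ne_zero_of_det_ne_zero (det_adjugate_ne_zero h))
  simp only [mobius, map_add, map_mul, map_neg, RatFunc.algebraMap_C, RatFunc.algebraMap_X,
    aeval_C, aeval_X, RatFunc.algebraMap_eq_C] at hD ⊢
  exact mobius_comp_inv (by simpa [← map_mul, ← map_sub] using h) hD

theorem mobius_ne_C (h : α * δ - β * γ ≠ 0) : ¬∃ c, mobius α β γ δ = RatFunc.C c := by
  rintro ⟨c, hc⟩
  rw [mobius, div_eq_iff (RatFunc.algebraMap_ne_zero (linear_ne_zero_of_det_ne_zero h)),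
    ← RatFunc.algebraMap_C, ← map_mul] at hc
  have hpoly := IsFractionRing.injective ℝ[X] (RatFunc ℝ) hc
  have hα : α = c * γ := by simpa using congrArg (coeff · 1) hpoly
  have hβ : β = c * δ := by simpa using congrArg (coeff · 0) hpoly
  exact h (by rw [hα, hβ]; ring)

theorem sup_natDegree_le_of_eq_mul_aeval_mobius {ι : Type*} [Fintype ι]
    (h : α * δ - β * γ ≠ 0) {s q : ι → ℝ[X]} (hs : IsRelPrimeFamily s) {a : RatFunc ℝ}
    (heq : ∀ i, algebraMap ℝ[X] (RatFunc ℝ) (s i) = a * aeval (mobius α β γ δ) (q i)) :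
    Finset.univ.sup (fun i => (s i).natDegree) ≤ Finset.univ.sup (fun i => (q i).natDegree) :=
  sup_natDegree_le_of_eq_mul_aeval_div (by compute_degree) (by compute_degree)
    (linear_ne_zero_of_det_ne_zero h) hs heq

theorem exists_eq_mul_aeval_mobius_inv {ι : Type*} (h : α * δ - β * γ ≠ 0) {s q : ι → ℝ[X]}
    {a : RatFunc ℝ} (ha : a ≠ 0)
    (heq : ∀ i, algebraMap ℝ[X] (RatFunc ℝ) (s i) = a * aeval (mobius α β γ δ) (q i)) :
    ∃ b, ∀ i, algebraMap ℝ[X] (RatFunc ℝ) (q i) = b * aeval (mobius δ (-β) (-γ) α) (s i) := by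
  have hinj := transcendental_iff_injective.mp
    (RatFunc.transcendental_of_ne_C _ (mobius_ne_C (det_adjugate_ne_zero h)))
  have hφ := nonZeroDivisors_le_comap_nonZeroDivisors_of_injective _ hinj
  set Φ := RatFunc.liftAlgHom (aeval (mobius δ (-β) (-γ) α)) hφ
  have hΦ p : Φ (algebraMap ℝ[X] (RatFunc ℝ) p) = aeval (mobius δ (-β) (-γ) α) p := by
    simpa using RatFunc.liftAlgHom_apply_div (aeval (mobius δ (-β) (-γ) α)) hφ p 1
  have hΦψ : Φ (mobius α β γ δ) = RatFunc.X := by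
    rw [mobius, RatFunc.liftAlgHom_apply_div]
    exact aeval_mobius_inv_div h
  refine ⟨(Φ a)⁻¹, fun i => ?_⟩
  have hi := congrArg Φ (heq i)
  rw [hΦ, map_mul, ← aeval_algHom_apply, hΦψ, ← RatFunc.algebraMap_X, aeval_algebraMap_apply,
    aeval_X_left_apply] at hi
  rw [hi, inv_mul_cancel_left₀ ((map_ne_zero Φ).mpr ha)]

end Mobius

/-- Corollary 1 of the paper: if the surfaces are affinely equivalent, the
maximal degrees of the direction triples coincide. -/
theorem stmt_8 (α β γ δ : ℝ) (h : α * δ - β * γ ≠ 0)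
    (M : Matrix (Fin 3) (Fin 3) ℝ) (hM : IsUnit M)
    (q₁ q₂ : Fin 3 → Polynomial ℝ)
    (hc1 : ∀ d : Polynomial ℝ, (∀ i, d ∣ q₁ i) → IsUnit d)
    (hc2 : ∀ d : Polynomial ℝ, (∀ i, d ∣ q₂ i) → IsUnit d)
    (a : RatFunc ℝ)
    (heq : ∀ i, algebraMap (Polynomial ℝ) (RatFunc ℝ) (∑ j, M i j • q₁ j)
      = a * Polynomial.aeval (mobius α β γ δ) (q₂ i)) :
    (Finset.univ.sup fun i => (q₁ i).natDegree)
      = (Finset.univ.sup fun i => (q₂ i).natDegree) := by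
  open Matrix.Module in
  have heq' : ∀ i, algebraMap ℝ[X] (RatFunc ℝ) ((M • q₁) i)
      = a * aeval (mobius α β γ δ) (q₂ i) := heq
  have hs : IsRelPrimeFamily (M • q₁) := IsRelPrimeFamily.matrix_smul hM hc1
  have ha : a ≠ 0 := by
    rintro rfl
    obtain ⟨i, hi⟩ := hs.exists_ne_zero
    have hzero := heq' i
    rw [zero_mul, map_eq_zero_iff _ (IsFractionRing.injective ℝ[X] (RatFunc ℝ))] at hzero
    exact hi hzero
  obtain ⟨b, hb⟩ := exists_eq_mul_aeval_mobius_inv h ha heq'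
  apply le_antisymm
  · exact (sup_natDegree_le_sup_natDegree_matrix_smul hM q₁).trans
      (sup_natDegree_le_of_eq_mul_aeval_mobius h hs heq')
  · exact (sup_natDegree_le_of_eq_mul_aeval_mobius (det_adjugate_ne_zero h) hc2 hb).trans
      (sup_natDegree_matrix_smul_le M q₁)
end

section
/- Let α, β, γ, δ be real numbers with α·δ − β·γ ≠ 0, and let q₁, q₂, q₃ ∈ ℝ[X] be polynomials, not all zero, having only unit common divisors. Let n := max of natDegree q₁, natDegree q₂, natDegree q₃, and for each i let Nᵢ := N_n(qᵢ) be the homogenized Möbius composite with common exponent n. Then max of natDegree N₁, natDegree N₂, natDegree N₃ equals n. -/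
open Polynomial

/-- The homogenized Möbius composite `N_ℓ(q)`. -/
noncomputable def Nhom (α β γ δ : ℝ) (ℓ : ℕ) (q : Polynomial ℝ) : Polynomial ℝ :=
  ∑ j ∈ Finset.range (ℓ + 1),
    (q.coeff j) • ((C α * X + C β) ^ j * (C γ * X + C δ) ^ (ℓ - j))

/-!
The coefficient of `X ^ n` in `N_n(q)` is `∑ⱼ qⱼ αʲ γⁿ⁻ʲ`, the homogenization of `q` evaluated
at `(α, γ)`. For `γ ≠ 0` it equals `γⁿ q(α/γ)`, and the `qᵢ` have no common root `α/γ`, since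
`X - C (α/γ)` would be a non-unit common divisor. For `γ = 0` it equals `αⁿ` times the `n`-th
coefficient of `q`, with `α ≠ 0` by `αδ - βγ ≠ 0`, and some `qᵢ` has degree exactly `n`.
Either way some `Nᵢ` reaches degree `n`, which bounds all of them.
-/

namespace Polynomial

section CommSemiring

variable {R : Type*} [CommSemiring R]

lemma natDegree_linear_pow_le (a b : R) (j : ℕ) : ((C a * X + C b) ^ j).natDegree ≤ j := by
  simpa using natDegree_pow_le_of_le j natDegree_linear_le

lemma coeff_linear_pow_mul_linear_pow (a b c d : R) (j k : ℕ) :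
    ((C a * X + C b) ^ j * (C c * X + C d) ^ k).coeff (j + k) = a ^ j * c ^ k := by
  rw [coeff_mul_add_eq_of_natDegree_le (natDegree_linear_pow_le a b j)
    (natDegree_linear_pow_le c d k)]
  congr 1
  · simpa using coeff_pow_of_natDegree_le (p := C a * X + C b) (m := j) natDegree_linear_le
  · simpa using coeff_pow_of_natDegree_le (p := C c * X + C d) (m := k) natDegree_linear_le

end CommSemiring

lemma exists_eval_ne_zero_of_dvd_imp_isUnit {R : Type*} [CommRing R] [Nontrivial R]
    {p₁ p₂ p₃ : R[X]} (hcop : ∀ d : R[X], d ∣ p₁ → d ∣ p₂ → d ∣ p₃ → IsUnit d) (x : R) :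
    ∃ p ∈ ({p₁, p₂, p₃} : Set R[X]), p.eval x ≠ 0 := by
  by_contra! hroot
  simp only [Set.mem_insert_iff, Set.mem_singleton_iff, forall_eq_or_imp, forall_eq] at hroot
  obtain ⟨h₁, h₂, h₃⟩ := hroot
  exact not_isUnit_X_sub_C x
    (hcop _ (dvd_iff_isRoot.2 h₁) (dvd_iff_isRoot.2 h₂) (dvd_iff_isRoot.2 h₃))

lemma exists_ne_zero_natDegree_eq_max {R : Type*} [Semiring R] {p₁ p₂ p₃ : R[X]}
    (hne : ¬(p₁ = 0 ∧ p₂ = 0 ∧ p₃ = 0)) :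
    ∃ p ∈ ({p₁, p₂, p₃} : Set R[X]),
      p ≠ 0 ∧ p.natDegree = max (max p₁.natDegree p₂.natDegree) p₃.natDegree := by
  set n := max (max p₁.natDegree p₂.natDegree) p₃.natDegree
  by_cases h0 : n = 0
  · have h₁ : p₁.natDegree = n := by omega
    have h₂ : p₂.natDegree = n := by omega
    have h₃ : p₃.natDegree = n := by omega
    by_cases hp₁ : p₁ = 0
    · by_cases hp₂ : p₂ = 0
      · exact ⟨p₃, by simp, fun hp₃ => hne ⟨hp₁, hp₂, hp₃⟩, h₃⟩
      · exact ⟨p₂, by simp, hp₂, h₂⟩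
    · exact ⟨p₁, by simp, hp₁, h₁⟩
  · have hpos : ∀ p : R[X], p.natDegree = n → p ≠ 0 := fun p hp =>
      ne_zero_of_natDegree_gt (n := 0) (by omega)
    rcases (by omega : p₁.natDegree = n ∨ p₂.natDegree = n ∨ p₃.natDegree = n)
      with h | h | h
    · exact ⟨p₁, by simp, hpos _ h, h⟩
    · exact ⟨p₂, by simp, hpos _ h, h⟩
    · exact ⟨p₃, by simp, hpos _ h, h⟩

end Polynomial

section Nhom

variable (α β γ δ : ℝ) (n : ℕ) (q : ℝ[X])

lemma natDegree_Nhom_le : (Nhom α β γ δ n q).natDegree ≤ n := by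
  refine natDegree_sum_le_of_forall_le _ _ fun j hj => ?_
  refine (natDegree_smul_le _ _).trans (natDegree_mul_le.trans ?_)
  have := natDegree_linear_pow_le α β j
  have := natDegree_linear_pow_le γ δ (n - j)
  simp only [Finset.mem_range] at hj
  omega

lemma coeff_Nhom_self :
    (Nhom α β γ δ n q).coeff n =
      ∑ j ∈ Finset.range (n + 1), q.coeff j * (α ^ j * γ ^ (n - j)) := by
  rw [Nhom, finsetSum_coeff]
  refine Finset.sum_congr rfl fun j hj => ?_
  have hj : j + (n - j) = n := Nat.add_sub_cancel' (Finset.mem_range_succ_iff.1 hj)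
  rw [coeff_smul, smul_eq_mul, ← coeff_linear_pow_mul_linear_pow α β γ δ, hj]

lemma coeff_Nhom_self_of_ne_zero (hγ : γ ≠ 0) (hq : q.natDegree ≤ n) :
    (Nhom α β γ δ n q).coeff n = γ ^ n * q.eval (α / γ) := by
  rw [coeff_Nhom_self, eval_eq_sum_range' (Nat.lt_succ_of_le hq), Finset.mul_sum]
  refine Finset.sum_congr rfl fun j hj => ?_
  have hγn : γ ^ n = γ ^ j * γ ^ (n - j) := by
    rw [← pow_add, Nat.add_sub_cancel' (Finset.mem_range_succ_iff.1 hj)]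
  rw [hγn, div_pow]
  field_simp

lemma coeff_Nhom_zero_self : (Nhom α β 0 δ n q).coeff n = α ^ n * q.coeff n := by
  rw [coeff_Nhom_self, Finset.sum_eq_single n]
  · simp [mul_comm]
  · intro j hj hjn
    rw [zero_pow (by simp at hj; omega), mul_zero, mul_zero]
  · simp

end Nhom

/-- For `q₁, q₂, q₃` (not all zero) with only unit common divisors and
`n = max natDegree qᵢ`, the maximal degree of the homogenized Möbius composites
`N_n(qᵢ)` is again `n`. -/
theorem stmt_9 (α β γ δ : ℝ) (h : α * δ - β * γ ≠ 0)
    (q₁ q₂ q₃ : Polynomial ℝ) (hne : ¬(q₁ = 0 ∧ q₂ = 0 ∧ q₃ = 0))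
    (hcop : ∀ d : Polynomial ℝ, d ∣ q₁ → d ∣ q₂ → d ∣ q₃ → IsUnit d)
    (n : ℕ) (hn : n = max (max q₁.natDegree q₂.natDegree) q₃.natDegree) :
    max (max (Nhom α β γ δ n q₁).natDegree (Nhom α β γ δ n q₂).natDegree)
      (Nhom α β γ δ n q₃).natDegree = n := by
  obtain ⟨q, hq, htop⟩ : ∃ q ∈ ({q₁, q₂, q₃} : Set ℝ[X]), (Nhom α β γ δ n q).coeff n ≠ 0 := by
    by_cases hγ : γ = 0
    · subst hγ
      have hα : α ≠ 0 := by rintro rfl; simp at h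
      obtain ⟨q, hq, hq0, hdeg⟩ := exists_ne_zero_natDegree_eq_max hne
      refine ⟨q, hq, ?_⟩
      rw [coeff_Nhom_zero_self, hn, ← hdeg]
      exact mul_ne_zero (pow_ne_zero _ hα) (leadingCoeff_ne_zero.2 hq0)
    · obtain ⟨q, hq, hroot⟩ := exists_eval_ne_zero_of_dvd_imp_isUnit hcop (α / γ)
      have hdeg : q.natDegree ≤ n := by
        rcases hq with rfl | rfl | rfl <;> omega
      refine ⟨q, hq, ?_⟩
      rw [coeff_Nhom_self_of_ne_zero α β γ δ n q hγ hdeg]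
      exact mul_ne_zero (pow_ne_zero _ hγ) hroot
  have := le_natDegree_of_ne_zero htop
  have := natDegree_Nhom_le α β γ δ n q₁
  have := natDegree_Nhom_le α β γ δ n q₂
  have := natDegree_Nhom_le α β γ δ n q₃
  rcases hq with rfl | rfl | rfl <;> omega
end
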